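/- Assume P contains at least one pick vertex and G admits a tour subgraph. Then there exists a minimum-length tour subgraph T of G such that, for every aisle j, the vertical edges of T in aisle j form one of the six configurations 1pass, top, bottom, gap, 2pass, none, and, for every 1 ≤ j < n, the horizontal edges of T between aisles j and j+1 form one of the five configurations 11, 20, 02, 22, 00. -/

import Mathlib

/-- Degree parity class of a vertex: degree zero, odd degree, or even positive degree. -/
inductive DegClass : Type
  | zero : DegClass
  | odd : DegClass
  | evenPos : DegClass
deriving DecidableEq

/-- The parity class of a natural number (a degree). -/
def degClass (d : ℕ) : DegClass :=
  if d = 0 then .zero else if d % 2 = 1 then .odd else .evenPos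

/-- Names of the six vertical edge configurations. -/
inductive VCName : Type
  | onepass : VCName
  | top : VCName
  | bottom : VCName
  | gap : VCName
  | twopass : VCName
  | none : VCName
deriving DecidableEq

/-- Names of the five horizontal edge configurations. -/
inductive HCName : Type
  | h11 : HCName
  | h20 : HCName
  | h02 : HCName
  | h22 : HCName
  | h00 : HCName
deriving DecidableEq

/-- Number of copies of the back cross-aisle edge `a_j a_{j+1}` in a horizontal configuration. -/
def hcA : HCName → ℕ
  | .h11 => 1
  | .h20 => 2
  | .h02 => 0
  | .h22 => 2
  | .h00 => 0

/-- Number of copies of the front cross-aisle edge `b_j b_{j+1}` in a horizontal configuration. -/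
def hcB : HCName → ℕ
  | .h11 => 1
  | .h20 => 0
  | .h02 => 2
  | .h22 => 2
  | .h00 => 0

/-- The seven equivalence classes, as triples (parity of `a_j`, parity of `b_j`, #components). -/
def cUU1C : DegClass × DegClass × ℕ := (.odd, .odd, 1)
def c0E1C : DegClass × DegClass × ℕ := (.zero, .evenPos, 1)
def cE01C : DegClass × DegClass × ℕ := (.evenPos, .zero, 1)
def cEE1C : DegClass × DegClass × ℕ := (.evenPos, .evenPos, 1)
def cEE2C : DegClass × DegClass × ℕ := (.evenPos, .evenPos, 2)
def c000C : DegClass × DegClass × ℕ := (.zero, .zero, 0)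
def c001C : DegClass × DegClass × ℕ := (.zero, .zero, 1)

/-- A single-block parallel-aisle warehouse in the sense of Ratliff and Rosenthal:
`n ≥ 1` vertical pick aisles, two horizontal cross-aisles, `picks j` pick vertices
strictly inside aisle `j`, nonnegative edge lengths, and a depot located at some
cross-aisle vertex `a_j` (if `depotTop`) or `b_j`. -/
structure Warehouse where
  n : ℕ
  npos : 1 ≤ n
  picks : Fin n → ℕ
  vlen : (j : Fin n) → Fin (picks j + 1) → ℝ
  hlenA : Fin (n - 1) → ℝ
  hlenB : Fin (n - 1) → ℝ
  vlen_nonneg : ∀ j i, 0 ≤ vlen j i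
  hlenA_nonneg : ∀ k, 0 ≤ hlenA k
  hlenB_nonneg : ∀ k, 0 ≤ hlenB k
  depotAisle : Fin n
  depotTop : Bool

namespace Warehouse

variable (W : Warehouse)

/-- Vertices of the warehouse graph: in aisle `j`, position `0` is the back cross-aisle
vertex `a_j`, position `picks j + 1` is the front cross-aisle vertex `b_j`, and
positions `1, …, picks j` are the pick vertices of aisle `j`. -/
def V : Type := Σ j : Fin W.n, Fin (W.picks j + 2)

instance : DecidableEq W.V :=
  inferInstanceAs (DecidableEq (Σ j : Fin W.n, Fin (W.picks j + 2)))

instance : Fintype W.V :=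
  inferInstanceAs (Fintype (Σ j : Fin W.n, Fin (W.picks j + 2)))

/-- The back cross-aisle vertex `a_j`. -/
def aV (j : Fin W.n) : W.V := ⟨j, 0⟩

/-- The front cross-aisle vertex `b_j`. -/
def bV (j : Fin W.n) : W.V := ⟨j, Fin.last (W.picks j + 1)⟩

/-- The depot vertex `v₀`. -/
def depot : W.V := if W.depotTop then W.aV W.depotAisle else W.bV W.depotAisle

/-- `v` is a pick vertex, i.e. a vertex strictly inside an aisle. -/
def IsPick (v : W.V) : Prop := 0 < v.2.val ∧ v.2.val < W.picks v.1 + 1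

/-- `v` is a required vertex, i.e. a member of `P` (a pick vertex or the depot). -/
def Required (v : W.V) : Prop := W.IsPick v ∨ v = W.depot

/-- Edges of the warehouse graph: a vertical edge `⟨j, i⟩` joins positions `i` and
`i+1` of aisle `j`; horizontal edges `inr (inl k)` join `a_k a_{k+1}` and
`inr (inr k)` join `b_k b_{k+1}`. -/
def E : Type := (Σ j : Fin W.n, Fin (W.picks j + 1)) ⊕ (Fin (W.n - 1) ⊕ Fin (W.n - 1))

instance : DecidableEq W.E :=
  inferInstanceAs (DecidableEq ((Σ j : Fin W.n, Fin (W.picks j + 1)) ⊕ (Fin (W.n - 1) ⊕ Fin (W.n - 1))))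

instance : Fintype W.E :=
  inferInstanceAs (Fintype ((Σ j : Fin W.n, Fin (W.picks j + 1)) ⊕ (Fin (W.n - 1) ⊕ Fin (W.n - 1))))

/-- The left aisle of a horizontal edge index. -/
def leftAisle (k : Fin (W.n - 1)) : Fin W.n := ⟨k.val, by have := k.isLt; omega⟩

/-- The right aisle of a horizontal edge index. -/
def rightAisle (k : Fin (W.n - 1)) : Fin W.n := ⟨k.val + 1, by have := k.isLt; omega⟩

/-- Endpoints of an edge. -/
def ends : W.E → W.V × W.V
  | .inl ⟨j, i⟩ => (⟨j, i.castSucc⟩, ⟨j, i.succ⟩)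
  | .inr (.inl k) => (W.aV (W.leftAisle k), W.aV (W.rightAisle k))
  | .inr (.inr k) => (W.bV (W.leftAisle k), W.bV (W.rightAisle k))

/-- Length of an edge. -/
def elen : W.E → ℝ
  | .inl ⟨j, i⟩ => W.vlen j i
  | .inr (.inl k) => W.hlenA k
  | .inr (.inr k) => W.hlenB k

/-- A subgraph of `G` is a multiplicity function taking each edge with multiplicity at most 2. -/
def IsSub (T : W.E → ℕ) : Prop := ∀ e, T e ≤ 2

/-- Degree of a vertex in a subgraph, counting edges with multiplicity. -/
def deg (T : W.E → ℕ) (v : W.V) : ℕ :=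
  ∑ e : W.E, T e * ((if (W.ends e).1 = v then 1 else 0) + (if (W.ends e).2 = v then 1 else 0))

/-- Total length of a subgraph, counting edges with multiplicity. -/
def length (T : W.E → ℕ) : ℝ := ∑ e : W.E, (T e : ℝ) * W.elen e

/-- Source of a directed traversal step. -/
def stepSrc (s : W.E × Bool) : W.V := if s.2 then (W.ends s.1).1 else (W.ends s.1).2

/-- Destination of a directed traversal step. -/
def stepDst (s : W.E × Bool) : W.V := if s.2 then (W.ends s.1).2 else (W.ends s.1).1

/-- A list of directed steps is a closed walk. -/
def IsClosedWalk (l : List (W.E × Bool)) : Prop :=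
  l.Chain' (fun s t => W.stepDst s = W.stepSrc t) ∧
  ∀ s ∈ l.head?, ∀ t ∈ l.getLast?, W.stepDst t = W.stepSrc s

/-- `T` is a tour subgraph: every required vertex has positive degree and there is a
closed walk traversing every edge of `T`, counted with multiplicity, exactly once. -/
def IsTour (T : W.E → ℕ) : Prop :=
  W.IsSub T ∧ (∀ v, W.Required v → 0 < W.deg T v) ∧
  ∃ l : List (W.E × Bool), W.IsClosedWalk l ∧ ∀ e : W.E, (l.map Prod.fst).count e = T e

/-- `T` is an `L` partial tour subgraph: `T` is a subgraph supported on `L` and there is a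
subgraph `C` of `G − L` such that `T ∪ C` is a tour subgraph of `G`. -/
def IsPTS (L : Set W.E) (T : W.E → ℕ) : Prop :=
  W.IsSub T ∧ (∀ e ∉ L, T e = 0) ∧
  ∃ C : W.E → ℕ, W.IsSub C ∧ (∀ e ∈ L, C e = 0) ∧ W.IsTour (fun e => T e + C e)

/-- Two `L` PTSs are equivalent: any completion of one is a completion of the other. -/
def EquivPTS (L : Set W.E) (T₁ T₂ : W.E → ℕ) : Prop :=
  ∀ C : W.E → ℕ, W.IsSub C → (∀ e ∈ L, C e = 0) →
    (W.IsTour (fun e => T₁ e + C e) ↔ W.IsTour (fun e => T₂ e + C e))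

/-- The edge set containing the vertical edges of the (0-indexed) aisles `< vmax` and the
horizontal edges with (0-indexed) index `< hmax`.  Thus, in paper (1-indexed) notation,
`L_j = edgesUpTo j (j-1)`, `L_j^- = edgesUpTo (j-1) (j-1)` and `G = edgesUpTo n (n-1)`. -/
def edgesUpTo (vmax hmax : ℕ) : Set W.E := fun e =>
  match e with
  | .inl ⟨i, _⟩ => i.val < vmax
  | .inr (.inl k) => k.val < hmax
  | .inr (.inr k) => k.val < hmax

/-- The simple graph on the vertices of `G` induced by the edges of positive multiplicity. -/
def sgraph (T : W.E → ℕ) : SimpleGraph W.V where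
  Adj v w := v ≠ w ∧ ∃ e, 0 < T e ∧
    (((W.ends e).1 = v ∧ (W.ends e).2 = w) ∨ ((W.ends e).1 = w ∧ (W.ends e).2 = v))
  symm := by
    constructor
    intro v w hvw
    obtain ⟨hne, e, he, hor⟩ := hvw
    exact ⟨hne.symm, e, he, hor.symm⟩
  loopless := by constructor; intro v h; exact h.1 rfl

/-- Number of connected components of a subgraph after deleting all vertices of degree zero. -/
noncomputable def numComp (T : W.E → ℕ) : ℕ :=
  Nat.card ((W.sgraph T).induce {v : W.V | 0 < W.deg T v}).ConnectedComponent

/-- `v` and `w` both have positive degree but lie in different connected components of `T`. -/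
def SepComp (T : W.E → ℕ) (v w : W.V) : Prop :=
  0 < W.deg T v ∧ 0 < W.deg T w ∧ ¬ (W.sgraph T).Reachable v w

/-- The equivalence class of a subgraph relative to the cross-aisle vertices of aisle `j`:
the degree parities of `a_j` and `b_j` and the number of nonempty connected components. -/
noncomputable def classOf (T : W.E → ℕ) (j : Fin W.n) : DegClass × DegClass × ℕ :=
  (degClass (W.deg T (W.aV j)), degClass (W.deg T (W.bV j)), W.numComp T)

theorem exists_gapIdx (j : Fin W.n) :
    ∃ g : Fin (W.picks j + 1), ∀ i, W.vlen j i ≤ W.vlen j g := by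
  obtain ⟨g, -, hg⟩ :=
    Finset.exists_max_image (Finset.univ : Finset (Fin (W.picks j + 1))) (W.vlen j)
      ⟨0, Finset.mem_univ 0⟩
  exact ⟨g, fun i => hg i (Finset.mem_univ i)⟩

/-- The vertical edge of aisle `j` of maximum length: the edge omitted by the `gap`
configuration (which leaves the largest section of the aisle unconnected). -/
noncomputable def gapIdx (j : Fin W.n) : Fin (W.picks j + 1) := (W.exists_gapIdx j).choose

theorem gapIdx_spec (j : Fin W.n) : ∀ i, W.vlen j i ≤ W.vlen j (W.gapIdx j) :=
  (W.exists_gapIdx j).choose_spec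

/-- The multiplicity of the `i`-th vertical edge of aisle `j` in each of the six vertical
edge configurations. -/
noncomputable def vconfFun (j : Fin W.n) (c : VCName) (i : Fin (W.picks j + 1)) : ℕ :=
  match c with
  | .onepass => 1
  | .top => if i.val < W.picks j then 2 else 0
  | .bottom => if 1 ≤ i.val then 2 else 0
  | .gap => if i = W.gapIdx j then 0 else 2
  | .twopass => 2
  | .none => 0

/-- A vertical edge configuration in aisle `j`, as a subgraph of `G`. -/
noncomputable def vcSub (j : Fin W.n) (c : VCName) : W.E → ℕ := fun e =>
  match e with
  | .inl ⟨i, x⟩ =>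
      if h : i = j then W.vconfFun j c ⟨x.val, by exact h ▸ x.isLt⟩ else 0
  | .inr _ => 0

/-- A horizontal edge configuration between aisles `k` and `k+1`, as a subgraph of `G`. -/
def hcSub (k : Fin (W.n - 1)) (c : HCName) : W.E → ℕ := fun e =>
  match e with
  | .inl _ => 0
  | .inr (.inl k') => if k' = k then hcA c else 0
  | .inr (.inr k') => if k' = k then hcB c else 0

end Warehouse

/-!
A tour subgraph carries a closed walk, so it crosses the boundary of any vertex set an even
number of times, and a vertex set that no edge of the tour leaves contains all of the tour's
vertices or none of them. Parity across the cut between aisles `k` and `k + 1` gives the five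
horizontal configurations. Parity across segments of an aisle makes all its vertical
multiplicities congruent mod 2, and two unused vertical edges would cut the pick vertices between
them off from the depot; so each aisle is traversed once, twice, or twice except for one unused
edge. If that edge is the first, the last or a longest one, the aisle is `bottom`, `top` or `gap`.
Otherwise the segments above and below it hang off `a_j` and `b_j`, which the rest of the tour
reaches through horizontal edges; cutting them out of the walk and splicing in the segments
around a longest edge gives a tour that is no longer. Doing this aisle by aisle, starting from a
minimum tour, proves the theorem.
-/

/-- An inductive form of the chain condition of `Warehouse.IsClosedWalk`, with explicit
endpoints. -/
inductive IsStepWalk {σ β : Type*} (src dst : σ → β) : List σ → β → β → Prop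
  | nil (x : β) : IsStepWalk src dst [] x x
  | cons {s : σ} {l : List σ} {y : β} :
      IsStepWalk src dst l (dst s) y → IsStepWalk src dst (s :: l) (src s) y

namespace IsStepWalk

variable {σ β : Type*} {src dst : σ → β} {l l₁ l₂ : List σ} {x y z : β}

theorem append (h₁ : IsStepWalk src dst l₁ x y) (h₂ : IsStepWalk src dst l₂ y z) :
    IsStepWalk src dst (l₁ ++ l₂) x z := by
  induction h₁ with
  | nil => exact h₂
  | cons _ ih => exact cons (ih h₂)

theorem exists_split {s : σ} (h : IsStepWalk src dst l x y) (hs : s ∈ l) :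
    ∃ l₁ l₂, l = l₁ ++ s :: l₂ ∧ IsStepWalk src dst l₁ x (src s) ∧
      IsStepWalk src dst l₂ (dst s) y := by
  induction h with
  | nil => simp at hs
  | @cons t l y h ih =>
    rcases List.mem_cons.mp hs with rfl | hs
    · exact ⟨[], l, rfl, nil _, h⟩
    · obtain ⟨l₁, l₂, rfl, h₁, h₂⟩ := ih hs
      exact ⟨t :: l₁, l₂, rfl, cons h₁, h₂⟩

theorem splice {s : σ} {v : β} {m : List σ} (h : IsStepWalk src dst l x y) (hs : s ∈ l)
    (hv : v = src s ∨ v = dst s) (hm : IsStepWalk src dst m v v) :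
    ∃ l', IsStepWalk src dst l' x y ∧ l'.Perm (l ++ m) := by
  obtain ⟨l₁, l₂, rfl, h₁, h₂⟩ := h.exists_split hs
  rcases hv with rfl | rfl
  · refine ⟨l₁ ++ m ++ s :: l₂, (h₁.append hm).append (cons h₂), ?_⟩
    simpa using (List.perm_append_comm (l₁ := m) (l₂ := s :: l₂)).append_left l₁
  · refine ⟨l₁ ++ s :: m ++ l₂, (h₁.append (cons hm)).append h₂, ?_⟩
    simpa using ((List.perm_append_comm (l₁ := m) (l₂ := l₂)).cons s).append_left l₁

theorem map {γ : Type*} (φ : β → γ) (h : IsStepWalk src dst l x y) :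
    IsStepWalk (φ ∘ src) (φ ∘ dst) l (φ x) (φ y) := by
  induction h with
  | nil => exact nil _
  | cons _ ih => exact cons ih

theorem filter (p : σ → Bool) (hloop : ∀ s ∈ l, p s = false → src s = dst s)
    (h : IsStepWalk src dst l x y) : IsStepWalk src dst (l.filter p) x y := by
  induction h with
  | nil => exact nil _
  | @cons s l y h ih =>
    have ih := ih fun t ht => hloop t (List.mem_cons_of_mem _ ht)
    by_cases hs : p s
    · simpa [List.filter_cons, hs] using cons ih
    · simpa [List.filter_cons, hs, hloop s (by simp) (by simpa using hs)] using ih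

theorem of_comp {π : β → β} (hfix : ∀ s ∈ l, π (src s) = src s ∧ π (dst s) = dst s)
    (h : IsStepWalk (π ∘ src) (π ∘ dst) l x y) (hl : l ≠ []) : IsStepWalk src dst l x y := by
  induction h with
  | nil => exact absurd rfl hl
  | @cons s l y h ih =>
    obtain ⟨hsrc, hdst⟩ := hfix s (by simp)
    simp only [Function.comp_apply, hsrc]
    rcases eq_or_ne l [] with rfl | hne
    · cases h
      simpa [hdst] using cons (nil (src := src) (dst := dst) (dst s))
    · have ih := ih (fun t ht => hfix t (List.mem_cons_of_mem _ ht)) hne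
      simp only [Function.comp_apply, hdst] at ih
      exact cons ih

theorem reverse (rev : σ → σ) (hsrc : ∀ s, src (rev s) = dst s) (hdst : ∀ s, dst (rev s) = src s)
    (h : IsStepWalk src dst l x y) : IsStepWalk src dst (l.reverse.map rev) y x := by
  induction h with
  | nil => exact nil _
  | @cons s l y h ih =>
    simp only [List.reverse_cons, List.map_append, List.map_cons, List.map_nil]
    refine ih.append ?_
    simpa [hsrc, hdst] using cons (nil (src := src) (dst := dst) (dst (rev s)))

theorem even_countP_iff (S : Set β) [DecidablePred (· ∈ S)] (h : IsStepWalk src dst l x y) :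
    Even (l.countP fun s => ¬(src s ∈ S ↔ dst s ∈ S)) ↔ (x ∈ S ↔ y ∈ S) := by
  induction h with
  | nil => simp
  | @cons s l y h ih =>
    rw [List.countP_cons]
    split_ifs with hs
    · rw [Nat.even_add_one, ih]
      simp only [decide_eq_true_eq] at hs
      tauto
    · simp only [decide_eq_true_eq, not_not] at hs
      rw [add_zero, ih, hs]

theorem mem_iff_of_forall (S : Set β) (hS : ∀ s ∈ l, (src s ∈ S ↔ dst s ∈ S))
    (h : IsStepWalk src dst l x y) {s : σ} (hs : s ∈ l) :
    (src s ∈ S ↔ x ∈ S) ∧ (dst s ∈ S ↔ x ∈ S) := by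
  induction h with
  | nil => simp at hs
  | @cons t l y h ih =>
    have ht := hS t (by simp)
    rcases List.mem_cons.mp hs with rfl | hs
    · exact ⟨Iff.rfl, ht.symm⟩
    · have := ih (fun u hu => hS u (List.mem_cons_of_mem _ hu)) hs
      exact ⟨this.1.trans ht.symm, this.2.trans ht.symm⟩

theorem isChain (h : IsStepWalk src dst l x y) :
    l.IsChain (fun s t => dst s = src t) ∧ (∀ s ∈ l.head?, src s = x) ∧
      ∀ t ∈ l.getLast?, dst t = y := by
  induction h with
  | nil => simp
  | @cons s l y h ih =>
    obtain ⟨hc, hhead, hlast⟩ := ih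
    refine ⟨List.isChain_cons.mpr ⟨fun t ht => (hhead t ht).symm, hc⟩, by simp, ?_⟩
    cases l with
    | nil => cases h; simp
    | cons t l => simpa using hlast

theorem of_isChain {s : σ} {l : List σ} (h : (s :: l).IsChain (fun s t => dst s = src t)) :
    IsStepWalk src dst (s :: l) (src s) (dst ((s :: l).getLast (List.cons_ne_nil s l))) := by
  induction l generalizing s with
  | nil => exact cons (nil _)
  | cons t l ih =>
    obtain ⟨hst, hc⟩ := List.isChain_cons_cons.mp h
    refine cons ?_
    rw [hst]
    simpa using ih hc

end IsStepWalk

theorem List.countP_eq_sum_count {α : Type*} [Fintype α] [DecidableEq α] (p : α → Prop)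
    [DecidablePred p] (l : List α) : l.countP p = ∑ a, if p a then l.count a else 0 := by
  rw [← Finset.sum_filter, ← Finset.sum_filter_count_eq_countP]
  refine Finset.sum_subset (fun a => by simp) fun a _ ha => ?_
  simp_all [List.count_eq_zero]

theorem eq_one_or_eq_two_or_single_zero {ι : Type*} [DecidableEq ι] {f : ι → ℕ} (i₀ : ι)
    (hle : ∀ i, f i ≤ 2) (hpar : ∀ i, Even (f i₀ + f i))
    (hzero : ∀ i i', f i = 0 → f i' = 0 → i = i') :
    (∀ i, f i = 1) ∨ (∀ i, f i = 2) ∨ ∃ z, ∀ i, f i = if i = z then 0 else 2 := by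
  have hpar' : ∀ i, (Even (f i) ↔ Even (f i₀)) := fun i => (Nat.even_add.mp (hpar i)).symm
  by_cases h₀ : Even (f i₀)
  · have h02 : ∀ i, f i = 0 ∨ f i = 2 := fun i => by
      obtain ⟨k, hk⟩ := (hpar' i).mpr h₀
      have := hle i
      omega
    by_cases hz : ∃ z, f z = 0
    · obtain ⟨z, hz⟩ := hz
      refine .inr (.inr ⟨z, fun i => ?_⟩)
      split_ifs with hiz
      · rwa [hiz]
      · exact (h02 i).resolve_left fun hi => hiz (hzero i z hi hz)
    · exact .inr (.inl fun i => (h02 i).resolve_left fun hi => hz ⟨i, hi⟩)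
  · refine .inl fun i => ?_
    obtain ⟨k, hk⟩ := Nat.not_even_iff_odd.mp ((hpar' i).not.mpr h₀)
    have := hle i
    omega

theorem exists_hcName_of_even_add {a b : ℕ} (ha : a ≤ 2) (hb : b ≤ 2) (h : Even (a + b)) :
    ∃ c, a = hcA c ∧ b = hcB c := by
  obtain ⟨k, hk⟩ := h
  obtain ⟨rfl, rfl⟩ | ⟨rfl, rfl⟩ | ⟨rfl, rfl⟩ | ⟨rfl, rfl⟩ | ⟨rfl, rfl⟩ :
      a = 1 ∧ b = 1 ∨ a = 2 ∧ b = 0 ∨ a = 0 ∧ b = 2 ∨ a = 2 ∧ b = 2 ∨ a = 0 ∧ b = 0 := by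
    omega
  exacts [⟨.h11, rfl, rfl⟩, ⟨.h20, rfl, rfl⟩, ⟨.h02, rfl, rfl⟩, ⟨.h22, rfl, rfl⟩,
    ⟨.h00, rfl, rfl⟩]

namespace Warehouse

variable {W : Warehouse}

@[simp] theorem aV_fst (j : Fin W.n) : (W.aV j).1 = j := rfl
@[simp] theorem aV_snd_val (j : Fin W.n) : (W.aV j).2.val = 0 := rfl
@[simp] theorem bV_fst (j : Fin W.n) : (W.bV j).1 = j := rfl
@[simp] theorem bV_snd_val (j : Fin W.n) : (W.bV j).2.val = W.picks j + 1 := rfl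

@[simp] theorem aV_inj {j j' : Fin W.n} : W.aV j = W.aV j' ↔ j = j' :=
  ⟨congrArg Sigma.fst, by rintro rfl; rfl⟩

@[simp] theorem bV_inj {j j' : Fin W.n} : W.bV j = W.bV j' ↔ j = j' :=
  ⟨congrArg Sigma.fst, by rintro rfl; rfl⟩

@[simp] theorem aV_ne_bV (j j' : Fin W.n) : W.aV j ≠ W.bV j' := fun h => by
  simpa using congrArg (fun v : W.V => v.2.val) h

@[simp] theorem bV_ne_aV (j j' : Fin W.n) : W.bV j ≠ W.aV j' := (aV_ne_bV j' j).symm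

theorem depot_eq : W.depot = W.aV W.depotAisle ∨ W.depot = W.bV W.depotAisle := by
  unfold depot
  split <;> simp

theorem leftAisle_ne_rightAisle (k : Fin (W.n - 1)) : W.leftAisle k ≠ W.rightAisle k := by
  simp [leftAisle, rightAisle, Fin.ext_iff]

/-- `Sum.inl ⟨j, i⟩`, but with type `W.E` rather than the unfolded sum type, so that `rw` can
rewrite terms containing it. -/
def vert (W : Warehouse) (j : Fin W.n) (i : Fin (W.picks j + 1)) : W.E := .inl ⟨j, i⟩

@[simp] theorem vert_inj {j : Fin W.n} {i i' : Fin (W.picks j + 1)} :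
    W.vert j i = W.vert j i' ↔ i = i' := by
  refine ⟨fun h => ?_, by rintro rfl; rfl⟩
  injection h with h
  injection h

theorem ends_vert (j : Fin W.n) (i : Fin (W.picks j + 1)) :
    W.ends (W.vert j i) = (⟨j, i.castSucc⟩, ⟨j, i.succ⟩) := rfl

theorem horizA_ne_horizB (k k' : Fin (W.n - 1)) : (.inr (.inl k) : W.E) ≠ .inr (.inr k') := by
  simp

def vertAisle (W : Warehouse) : W.E → Option (Fin W.n)
  | .inl ⟨j, _⟩ => some j
  | .inr _ => none

@[simp] theorem vertAisle_vert (j : Fin W.n) (i : Fin (W.picks j + 1)) :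
    W.vertAisle (W.vert j i) = some j := rfl

theorem vertAisle_eq_some {e : W.E} {j : Fin W.n} :
    W.vertAisle e = some j ↔ ∃ i, e = W.vert j i := by
  refine ⟨fun h => ?_, by rintro ⟨i, rfl⟩; rfl⟩
  rcases e with ⟨j', i⟩ | k
  · obtain rfl : j' = j := Option.some_injective _ h
    exact ⟨i, rfl⟩
  · cases h

def Incident (W : Warehouse) (e : W.E) (v : W.V) : Prop := (W.ends e).1 = v ∨ (W.ends e).2 = v

theorem vertAisle_ne_of_incident {e : W.E} {v : W.V} {j : Fin W.n} (h : W.Incident e v)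
    (hv : v.1 ≠ j) : W.vertAisle e ≠ some j := by
  intro he
  obtain ⟨i, rfl⟩ := vertAisle_eq_some.mp he
  rcases h with rfl | rfl <;> exact hv rfl

def Crosses (W : Warehouse) (S : Set W.V) (e : W.E) : Prop :=
  ¬((W.ends e).1 ∈ S ↔ (W.ends e).2 ∈ S)

theorem step_ends (s : W.E × Bool) :
    W.stepSrc s = (W.ends s.1).1 ∧ W.stepDst s = (W.ends s.1).2 ∨
      W.stepSrc s = (W.ends s.1).2 ∧ W.stepDst s = (W.ends s.1).1 := by
  rcases s with ⟨e, _ | _⟩ <;> simp [stepSrc, stepDst]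

theorem incident_iff_step (s : W.E × Bool) (v : W.V) :
    W.Incident s.1 v ↔ W.stepSrc s = v ∨ W.stepDst s = v := by
  rcases s with ⟨e, _ | _⟩ <;> simp [Incident, stepSrc, stepDst, or_comm]

theorem crosses_iff_step (S : Set W.V) (s : W.E × Bool) :
    W.Crosses S s.1 ↔ ¬(W.stepSrc s ∈ S ↔ W.stepDst s ∈ S) := by
  rcases s with ⟨e, _ | _⟩ <;> simp [Crosses, stepSrc, stepDst, iff_comm]

theorem deg_pos_iff {T : W.E → ℕ} {v : W.V} :
    0 < W.deg T v ↔ ∃ e, 0 < T e ∧ W.Incident e v := by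
  simp [deg, Finset.sum_pos_iff, Incident, Nat.pos_iff_ne_zero]

theorem IsClosedWalk.of_isStepWalk {l : List (W.E × Bool)} {x : W.V}
    (h : IsStepWalk W.stepSrc W.stepDst l x x) : W.IsClosedWalk l := by
  obtain ⟨hc, hhead, hlast⟩ := h.isChain
  exact ⟨hc, fun s hs t ht => (hlast t ht).trans (hhead s hs).symm⟩

theorem IsClosedWalk.exists_isStepWalk {l : List (W.E × Bool)} (h : W.IsClosedWalk l) :
    ∃ x, IsStepWalk W.stepSrc W.stepDst l x x := by
  cases l with
  | nil => exact ⟨W.depot, .nil _⟩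
  | cons s l =>
    refine ⟨W.stepSrc s, ?_⟩
    have hw := IsStepWalk.of_isChain h.1
    rwa [h.2 s rfl _ (List.getLast?_eq_some_getLast _)] at hw

theorem IsTour.exists_isStepWalk {T : W.E → ℕ} (hT : W.IsTour T) :
    ∃ l x, IsStepWalk W.stepSrc W.stepDst l x x ∧ ∀ e, (l.map Prod.fst).count e = T e := by
  obtain ⟨-, -, l, hl, hcount⟩ := hT
  obtain ⟨x, hx⟩ := hl.exists_isStepWalk
  exact ⟨l, x, hx, hcount⟩

open Classical in
/-- A closed walk crosses the boundary of `S` an even number of times. -/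
theorem IsTour.even_sum_crosses {T : W.E → ℕ} (hT : W.IsTour T) (S : Set W.V) :
    Even (∑ e, if W.Crosses S e then T e else 0) := by
  obtain ⟨l, x, hl, hcount⟩ := hT.exists_isStepWalk
  simp_rw [← hcount]
  rw [← List.countP_eq_sum_count, List.countP_map]
  simpa [Function.comp_def, crosses_iff_step] using (hl.even_countP_iff S).mpr Iff.rfl

theorem IsTour.even_add_of_crosses_iff {T : W.E → ℕ} (hT : W.IsTour T) {S : Set W.V}
    {e₁ e₂ : W.E} (hne : e₁ ≠ e₂) (hS : ∀ e, W.Crosses S e ↔ e = e₁ ∨ e = e₂) :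
    Even (T e₁ + T e₂) := by
  classical
  have := hT.even_sum_crosses S
  rwa [Fintype.sum_eq_add e₁ e₂ hne (fun e he => if_neg (by rw [hS]; tauto)),
    if_pos ((hS _).mpr (.inl rfl)), if_pos ((hS _).mpr (.inr rfl))] at this

theorem IsTour.mem_iff_of_not_crosses {T : W.E → ℕ} (hT : W.IsTour T) {S : Set W.V}
    (hS : ∀ e, 0 < T e → ¬W.Crosses S e) {v w : W.V} (hv : 0 < W.deg T v)
    (hw : 0 < W.deg T w) : v ∈ S ↔ w ∈ S := by
  obtain ⟨l, x, hl, hcount⟩ := hT.exists_isStepWalk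
  have hstep : ∀ s ∈ l, (W.stepSrc s ∈ S ↔ W.stepDst s ∈ S) := fun s hs => by
    have hpos : 0 < T s.1 := by
      rw [← hcount, List.count_pos_iff]
      exact List.mem_map_of_mem hs
    simpa [crosses_iff_step] using hS _ hpos
  have key : ∀ u, 0 < W.deg T u → (u ∈ S ↔ x ∈ S) := by
    intro u hu
    obtain ⟨e, he, hinc⟩ := deg_pos_iff.mp hu
    rw [← hcount, List.count_pos_iff, List.mem_map] at he
    obtain ⟨s, hs, rfl⟩ := he
    have hmem := hl.mem_iff_of_forall S hstep hs
    rcases (incident_iff_step s u).mp hinc with rfl | rfl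
    exacts [hmem.1, hmem.2]
  exact (key v hv).trans (key w hw).symm

def aisleSet (W : Warehouse) (j : Fin W.n) (A : Set ℕ) : Set W.V := {v | v.1 = j ∧ v.2.val ∈ A}

@[simp]
theorem mem_aisleSet {j : Fin W.n} {A : Set ℕ} {v : W.V} :
    v ∈ W.aisleSet j A ↔ v.1 = j ∧ v.2.val ∈ A :=
  Iff.rfl

theorem crosses_aisleSet {j : Fin W.n} {A : Set ℕ} {e : W.E}
    (h : W.Crosses (W.aisleSet j A) e) :
    (∃ i, e = W.vert j i ∧ ¬(i.val ∈ A ↔ i.val + 1 ∈ A)) ∨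
      W.vertAisle e ≠ some j ∧
        (W.Incident e (W.aV j) ∧ 0 ∈ A ∨ W.Incident e (W.bV j) ∧ W.picks j + 1 ∈ A) := by
  simp only [Crosses, mem_aisleSet] at h
  rcases e with ⟨j', i⟩ | k | k
  · by_cases hj : j' = j
    · subst hj
      exact .inl ⟨i, rfl, by simpa [ends] using h⟩
    · simp [ends, hj] at h
  all_goals
    refine .inr ⟨by simp [vertAisle], ?_⟩
    simp only [ends, Incident, aV_inj, bV_inj, aV_ne_bV, bV_ne_aV, aV_fst, bV_fst, aV_snd_val,
      bV_snd_val] at h ⊢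
    have := W.leftAisle_ne_rightAisle k
    by_cases hl : W.leftAisle k = j
    · subst hl; tauto
    · by_cases hr : W.rightAisle k = j
      · subst hr; tauto
      · tauto

theorem crosses_aisleSet_Ioc_iff {j : Fin W.n} {i₁ i₂ : Fin (W.picks j + 1)} (h : i₁ < i₂)
    (e : W.E) :
    W.Crosses (W.aisleSet j (Set.Ioc i₁.val i₂.val)) e ↔ e = W.vert j i₁ ∨ e = W.vert j i₂ := by
  constructor
  · intro hc
    rcases crosses_aisleSet hc with ⟨i, rfl, hi⟩ | ⟨-, ⟨-, h0⟩ | ⟨-, hlast⟩⟩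
    · simp only [Set.mem_Ioc] at hi
      simp only [vert_inj, Fin.ext_iff]
      omega
    · simp at h0
    · simp at hlast; omega
  · rintro (rfl | rfl) <;> simp only [Crosses, mem_aisleSet] <;> simp [ends_vert] <;> omega

theorem crosses_le_iff (k : Fin (W.n - 1)) (e : W.E) :
    W.Crosses {v | v.1.val ≤ k.val} e ↔ e = .inr (.inl k) ∨ e = .inr (.inr k) := by
  simp only [Crosses, Set.mem_ofPred_eq]
  constructor
  · rcases e with ⟨j', i⟩ | k' | k' <;> simp only [ends, aV_fst, bV_fst, leftAisle, rightAisle] <;>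
      intro h
    · exact absurd trivial h
    · obtain rfl : k' = k := Fin.ext (by omega)
      exact .inl rfl
    · obtain rfl : k' = k := Fin.ext (by omega)
      exact .inr rfl
  · rintro (rfl | rfl) <;> simp [ends, leftAisle, rightAisle]

theorem depot_mem_aisleSet {j : Fin W.n} {A : Set ℕ} (h : W.depot ∈ W.aisleSet j A) :
    0 ∈ A ∨ W.picks j + 1 ∈ A := by
  rcases W.depot_eq with hd | hd <;> rw [hd] at h <;> obtain ⟨rfl, hA⟩ := h <;> simp_all

theorem required_mk {j : Fin W.n} {p : ℕ} (h₀ : 0 < p) (hp : p < W.picks j + 1) :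
    W.Required ⟨j, ⟨p, by omega⟩⟩ :=
  .inl ⟨h₀, hp⟩

theorem IsTour.even_add_horizontal {T : W.E → ℕ} (hT : W.IsTour T) (k : Fin (W.n - 1)) :
    Even (T (.inr (.inl k)) + T (.inr (.inr k))) :=
  hT.even_add_of_crosses_iff (horizA_ne_horizB k k) (crosses_le_iff k)

theorem IsTour.even_add_vert {T : W.E → ℕ} (hT : W.IsTour T) {j : Fin W.n}
    {i₁ i₂ : Fin (W.picks j + 1)} (h : i₁ < i₂) : Even (T (W.vert j i₁) + T (W.vert j i₂)) :=
  hT.even_add_of_crosses_iff (mt vert_inj.mp h.ne) (crosses_aisleSet_Ioc_iff h)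

theorem IsTour.exists_exit {T : W.E → ℕ} (hT : W.IsTour T) {j : Fin W.n} {A : Set ℕ}
    (hA : ∀ i : Fin (W.picks j + 1), ¬(i.val ∈ A ↔ i.val + 1 ∈ A) → T (W.vert j i) = 0)
    {v w : W.V} (hv : W.Required v) (hw : W.Required w) (hvA : v ∈ W.aisleSet j A)
    (hwA : w ∉ W.aisleSet j A) :
    ∃ e, 0 < T e ∧ W.vertAisle e ≠ some j ∧
      (W.Incident e (W.aV j) ∧ 0 ∈ A ∨ W.Incident e (W.bV j) ∧ W.picks j + 1 ∈ A) := by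
  by_contra hcon
  refine hwA ((hT.mem_iff_of_not_crosses (fun e he hc => ?_) (hT.2.1 v hv) (hT.2.1 w hw)).mp hvA)
  rcases crosses_aisleSet hc with ⟨i, rfl, hi⟩ | hexit
  · exact (hA i hi ▸ he).false
  · exact hcon ⟨e, he, hexit⟩

theorem IsTour.eq_of_vert_eq_zero {T : W.E → ℕ} (hT : W.IsTour T) {j : Fin W.n}
    {i₁ i₂ : Fin (W.picks j + 1)} (h₁ : T (W.vert j i₁) = 0) (h₂ : T (W.vert j i₂) = 0) :
    i₁ = i₂ := by
  wlog h : i₁ < i₂ generalizing i₁ i₂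
  · rcases lt_or_eq_of_le (not_lt.mp h) with h | h
    exacts [(this h₂ h₁ h).symm, h.symm]
  exfalso
  have hA (i : Fin (W.picks j + 1))
      (hi : ¬(i.val ∈ Set.Ioc i₁.val i₂.val ↔ i.val + 1 ∈ Set.Ioc i₁.val i₂.val)) :
      T (W.vert j i) = 0 := by
    simp only [Set.mem_Ioc] at hi
    obtain rfl | rfl : i = i₁ ∨ i = i₂ := by simp only [Fin.ext_iff]; omega
    exacts [h₁, h₂]
  obtain ⟨e, -, -, ⟨-, h0⟩ | ⟨-, hlast⟩⟩ := hT.exists_exit hA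
    (required_mk (j := j) (p := i₁.val + 1) (by omega) (by omega)) (.inr rfl)
    ⟨rfl, by simp only [Set.mem_Ioc]; omega⟩
    (fun h => (depot_mem_aisleSet h).elim (by simp) (by simp; omega))
  · simp at h0
  · simp at hlast; omega

theorem IsTour.exists_exit_aV {T : W.E → ℕ} (hT : W.IsTour T) {j : Fin W.n}
    {z : Fin (W.picks j + 1)} (hz₀ : 0 < z.val) (hz : z.val < W.picks j)
    (hTz : T (W.vert j z) = 0) :
    ∃ e, 0 < T e ∧ W.vertAisle e ≠ some j ∧ W.Incident e (W.aV j) := by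
  have hA (i : Fin (W.picks j + 1)) (hi : ¬(i.val ∈ Set.Iic z.val ↔ i.val + 1 ∈ Set.Iic z.val)) :
      T (W.vert j i) = 0 := by
    obtain rfl : i = z := Fin.ext (by simp only [Set.mem_Iic] at hi; omega)
    exact hTz
  obtain ⟨e, he, hej, ⟨hinc, -⟩ | ⟨-, hlast⟩⟩ := hT.exists_exit hA
    (required_mk (j := j) (p := 1) one_pos (by omega))
    (required_mk (j := j) (p := z.val + 1) (by omega) (by omega))
    ⟨rfl, by simp only [Set.mem_Iic]; omega⟩ (fun h => by have := h.2; simp at this)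
  · exact ⟨e, he, hej, hinc⟩
  · simp at hlast; omega

theorem IsTour.exists_exit_bV {T : W.E → ℕ} (hT : W.IsTour T) {j : Fin W.n}
    {z : Fin (W.picks j + 1)} (hz₀ : 0 < z.val) (hz : z.val < W.picks j)
    (hTz : T (W.vert j z) = 0) :
    ∃ e, 0 < T e ∧ W.vertAisle e ≠ some j ∧ W.Incident e (W.bV j) := by
  have hA (i : Fin (W.picks j + 1)) (hi : ¬(i.val ∈ Set.Ioi z.val ↔ i.val + 1 ∈ Set.Ioi z.val)) :
      T (W.vert j i) = 0 := by
    obtain rfl : i = z := Fin.ext (by simp only [Set.mem_Ioi] at hi; omega)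
    exact hTz
  obtain ⟨e, he, hej, ⟨-, h0⟩ | ⟨hinc, -⟩⟩ := hT.exists_exit hA
    (required_mk (j := j) (p := z.val + 1) (by omega) (by omega))
    (required_mk (j := j) (p := 1) one_pos (by omega))
    ⟨rfl, by simp only [Set.mem_Ioi]; omega⟩
    (fun h => by have := h.2; simp only [Set.mem_Ioi] at this; omega)
  · simp at h0
  · exact ⟨e, he, hej, hinc⟩

theorem IsTour.aisle_trichotomy {T : W.E → ℕ} (hT : W.IsTour T) (j : Fin W.n) :
    (∀ i, T (W.vert j i) = 1) ∨ (∀ i, T (W.vert j i) = 2) ∨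
      ∃ z, ∀ i, T (W.vert j i) = if i = z then 0 else 2 := by
  refine eq_one_or_eq_two_or_single_zero 0 (fun i => hT.1 _) (fun i => ?_)
    (fun i i' => hT.eq_of_vert_eq_zero)
  rcases eq_or_ne i 0 with rfl | h
  · exact ⟨_, rfl⟩
  · exact hT.even_add_vert (Fin.pos_iff_ne_zero.mpr h)

theorem exists_vconfFun_of_single_zero {j : Fin W.n} {f : Fin (W.picks j + 1) → ℕ}
    {z : Fin (W.picks j + 1)} (hf : ∀ i, f i = if i = z then 0 else 2)
    (hz : z.val = 0 ∨ z.val = W.picks j ∨ z = W.gapIdx j) :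
    ∃ c, ∀ i, f i = W.vconfFun j c i := by
  rcases hz with hz | hz | rfl
  · refine ⟨.bottom, fun i => ?_⟩
    simp only [hf, vconfFun, Fin.ext_iff, hz]
    split_ifs <;> omega
  · refine ⟨.top, fun i => ?_⟩
    have := i.isLt
    simp only [hf, vconfFun, Fin.ext_iff, hz]
    split_ifs <;> omega
  · exact ⟨.gap, hf⟩

def collapse (W : Warehouse) (j : Fin W.n) (z : ℕ) (v : W.V) : W.V :=
  if v.1 = j then (if v.2.val ≤ z then W.aV j else W.bV j) else v

theorem collapse_aV (j j' : Fin W.n) (z : ℕ) : W.collapse j z (W.aV j') = W.aV j' := by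
  by_cases h : j' = j
  · subst h; simp [collapse]
  · simp [collapse, h]

theorem collapse_bV {j : Fin W.n} {z : ℕ} (hz : z < W.picks j + 1) (j' : Fin W.n) :
    W.collapse j z (W.bV j') = W.bV j' := by
  by_cases h : j' = j
  · subst h; simp [collapse]; omega
  · simp [collapse, h]

theorem collapse_mk_self {j : Fin W.n} {z : ℕ} (x : Fin (W.picks j + 2)) :
    W.collapse j z ⟨j, x⟩ = if x.val ≤ z then W.aV j else W.bV j :=
  if_pos rfl

theorem collapse_ends_vert {j : Fin W.n} {z : ℕ} {i : Fin (W.picks j + 1)} (hi : i.val ≠ z) :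
    W.collapse j z (W.ends (W.vert j i)).1 = W.collapse j z (W.ends (W.vert j i)).2 := by
  rw [ends_vert, collapse_mk_self, collapse_mk_self, Fin.val_castSucc, Fin.val_succ]
  split_ifs <;> first | rfl | omega

theorem collapse_ends_of_vertAisle_ne {j : Fin W.n} {z : ℕ} (hz : z < W.picks j + 1) {e : W.E}
    (he : W.vertAisle e ≠ some j) :
    W.collapse j z (W.ends e).1 = (W.ends e).1 ∧ W.collapse j z (W.ends e).2 = (W.ends e).2 := by
  rcases e with ⟨j', i⟩ | k | k
  · have hj : j' ≠ j := fun h => he (by subst h; rfl)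
    exact ⟨if_neg hj, if_neg hj⟩
  · exact ⟨collapse_aV _ _ _, collapse_aV _ _ _⟩
  · exact ⟨collapse_bV hz _, collapse_bV hz _⟩

/-- Under `collapse j z` the deleted steps become loops and the kept ones are unchanged. -/
theorem isStepWalk_filter_vertAisle_ne {l : List (W.E × Bool)} {x : W.V} {j : Fin W.n}
    {z : Fin (W.picks j + 1)} (h : IsStepWalk W.stepSrc W.stepDst l x x)
    (hz : ∀ s ∈ l, s.1 ≠ W.vert j z) (hne : l.filter (fun s => W.vertAisle s.1 ≠ some j) ≠ []) :
    IsStepWalk W.stepSrc W.stepDst (l.filter fun s => W.vertAisle s.1 ≠ some j)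
      (W.collapse j z x) (W.collapse j z x) := by
  refine ((h.map (W.collapse j z)).filter _ (fun s hs hp => ?_)).of_comp (fun s hs => ?_) hne
  · obtain ⟨i, hi⟩ := vertAisle_eq_some.mp (by simpa using hp)
    have hiz : i.val ≠ z.val := fun h => hz s hs (by rw [hi, Fin.ext h])
    have := collapse_ends_vert (W := W) hiz
    rw [← hi] at this
    rcases step_ends s with ⟨h₁, h₂⟩ | ⟨h₁, h₂⟩ <;> simp only [Function.comp_apply, h₁, h₂, this]
  · have := collapse_ends_of_vertAisle_ne z.isLt (by simpa using (List.mem_filter.mp hs).2)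
    rcases step_ends s with ⟨h₁, h₂⟩ | ⟨h₁, h₂⟩ <;> simp only [h₁, h₂, this, and_self]

theorem exists_aislePath (j : Fin W.n) {lo hi : ℕ} (hlo : lo ≤ hi) (hhi : hi ≤ W.picks j + 1) :
    ∃ P : List (W.E × Bool),
      IsStepWalk W.stepSrc W.stepDst P ⟨j, ⟨lo, by omega⟩⟩ ⟨j, ⟨hi, by omega⟩⟩ ∧
      (∀ e, W.vertAisle e ≠ some j → (P.map Prod.fst).count e = 0) ∧
      ∀ i, (P.map Prod.fst).count (W.vert j i) = if lo ≤ i.val ∧ i.val < hi then 1 else 0 := by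
  revert hhi
  induction hi, hlo using Nat.le_induction with
  | base => exact fun _ => ⟨[], .nil _, fun _ _ => rfl, fun i => by rw [if_neg (by omega)]; rfl⟩
  | succ hi hlohi ih =>
    intro hhi
    obtain ⟨P, hP, hoff, hon⟩ := ih (by omega)
    refine ⟨P ++ [(W.vert j ⟨hi, by omega⟩, true)], hP.append (.cons (.nil _)), fun e he => ?_,
      fun i => ?_⟩
    · rw [List.map_append, List.count_append, hoff e he, List.map_singleton,
        List.count_singleton', if_neg fun h => he (by rw [← h]; rfl)]
    · rw [List.map_append, List.count_append, hon i, List.map_singleton, List.count_singleton']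
      simp only [vert_inj, Fin.ext_iff]
      split_ifs <;> omega

theorem exists_aisleLoop (j : Fin W.n) {lo hi : ℕ} (hlo : lo ≤ hi) (hhi : hi ≤ W.picks j + 1)
    {v : W.V} (hv : v = ⟨j, ⟨lo, by omega⟩⟩ ∨ v = ⟨j, ⟨hi, by omega⟩⟩) :
    ∃ C : List (W.E × Bool), IsStepWalk W.stepSrc W.stepDst C v v ∧
      (∀ e, W.vertAisle e ≠ some j → (C.map Prod.fst).count e = 0) ∧
      ∀ i, (C.map Prod.fst).count (W.vert j i) = if lo ≤ i.val ∧ i.val < hi then 2 else 0 := by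
  obtain ⟨P, hP, hoff, hon⟩ := exists_aislePath j hlo hhi
  set R := P.reverse.map fun s => (s.1, !s.2)
  have hR : IsStepWalk W.stepSrc W.stepDst R _ _ :=
    hP.reverse _ (fun ⟨_, b⟩ => by cases b <;> rfl) (fun ⟨_, b⟩ => by cases b <;> rfl)
  have hcount (e : W.E) : (R.map Prod.fst).count e = (P.map Prod.fst).count e := by
    simp [R, Function.comp_def]
  have hoff' (e) (he : W.vertAisle e ≠ some j) :
      ((P ++ R).map Prod.fst).count e = 0 ∧ ((R ++ P).map Prod.fst).count e = 0 := by
    simp only [List.map_append, List.count_append, hcount, hoff e he, and_self]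
  have hon' (i) : ((P ++ R).map Prod.fst).count (W.vert j i) =
        (if lo ≤ i.val ∧ i.val < hi then 2 else 0) ∧
      ((R ++ P).map Prod.fst).count (W.vert j i) = if lo ≤ i.val ∧ i.val < hi then 2 else 0 := by
    simp only [List.map_append, List.count_append, hcount, hon i]
    split_ifs <;> simp
  rcases hv with rfl | rfl
  · exact ⟨P ++ R, hP.append hR, fun e he => (hoff' e he).1, fun i => (hon' i).1⟩
  · exact ⟨R ++ P, hR.append hP, fun e he => (hoff' e he).2, fun i => (hon' i).2⟩

def setGap (W : Warehouse) (T : W.E → ℕ) (j : Fin W.n) (g : Fin (W.picks j + 1)) (e : W.E) : ℕ :=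
  if W.vertAisle e = some j then (if e = W.vert j g then 0 else 2) else T e

theorem setGap_vert {T : W.E → ℕ} {j : Fin W.n} {g : Fin (W.picks j + 1)}
    (i : Fin (W.picks j + 1)) : W.setGap T j g (W.vert j i) = if i = g then 0 else 2 := by
  simp [setGap]

theorem setGap_of_vertAisle_ne {T : W.E → ℕ} {j : Fin W.n} {g : Fin (W.picks j + 1)} {e : W.E}
    (he : W.vertAisle e ≠ some j) : W.setGap T j g e = T e :=
  if_neg he

theorem IsSub.setGap {T : W.E → ℕ} (hT : W.IsSub T) (j : Fin W.n) (g : Fin (W.picks j + 1)) :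
    W.IsSub (W.setGap T j g) := fun e => by
  unfold Warehouse.setGap
  split_ifs
  exacts [zero_le_two, le_rfl, hT e]

theorem count_filter_vertAisle_ne (l : List (W.E × Bool)) (j : Fin W.n) (e : W.E) :
    ((l.filter fun s => W.vertAisle s.1 ≠ some j).map Prod.fst).count e =
      if W.vertAisle e = some j then 0 else (l.map Prod.fst).count e := by
  have : (l.filter fun s => W.vertAisle s.1 ≠ some j).map Prod.fst =
      (l.map Prod.fst).filter fun e => W.vertAisle e ≠ some j := by
    simp [List.filter_map, Function.comp_def]
  rw [this]
  split_ifs with he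
  · exact List.count_eq_zero.mpr fun hm => by simp [he] at hm
  · exact List.count_filter (by simpa using he)

theorem deg_setGap_pos {T : W.E → ℕ} {j : Fin W.n} {g : Fin (W.picks j + 1)}
    (hT : ∀ v, W.Required v → 0 < W.deg T v)
    (ha : ∃ e, 0 < T e ∧ W.vertAisle e ≠ some j ∧ W.Incident e (W.aV j))
    (hb : ∃ e, 0 < T e ∧ W.vertAisle e ≠ some j ∧ W.Incident e (W.bV j))
    {v : W.V} (hv : W.Required v) : 0 < W.deg (W.setGap T j g) v := by
  rw [deg_pos_iff]
  by_cases hvj : v.1 = j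
  · obtain ⟨j', x⟩ := v
    obtain rfl : j' = j := hvj
    have hx := x.isLt
    by_cases hx₀ : x.val = 0
    · obtain rfl : x = 0 := Fin.ext hx₀
      obtain ⟨e, he, hej, hinc⟩ := ha
      exact ⟨e, by rwa [setGap_of_vertAisle_ne hej], hinc⟩
    by_cases hxl : x.val = W.picks j' + 1
    · obtain rfl : x = Fin.last _ := Fin.ext hxl
      obtain ⟨e, he, hej, hinc⟩ := hb
      exact ⟨e, by rwa [setGap_of_vertAisle_ne hej], hinc⟩
    by_cases hg : g.val + 1 = x.val
    · refine ⟨W.vert j' ⟨x.val, by omega⟩, ?_, .inl (congrArg _ (Fin.ext rfl))⟩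
      rw [setGap_vert, if_neg fun h => by simp [Fin.ext_iff] at h; omega]
      exact two_pos
    · refine ⟨W.vert j' ⟨x.val - 1, by omega⟩, ?_, .inr (congrArg _ (Fin.ext (by simp; omega)))⟩
      rw [setGap_vert, if_neg fun h => by simp [Fin.ext_iff] at h; omega]
      exact two_pos
  · obtain ⟨e, he, hinc⟩ := deg_pos_iff.mp (hT v hv)
    exact ⟨e, by rwa [setGap_of_vertAisle_ne (vertAisle_ne_of_incident hinc hvj)], hinc⟩

theorem IsTour.exists_isStepWalk_without_aisle {T : W.E → ℕ} (hT : W.IsTour T) {j : Fin W.n}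
    {z : Fin (W.picks j + 1)} (hz₀ : 0 < z.val) (hz : z.val < W.picks j)
    (hTz : T (W.vert j z) = 0) :
    ∃ l y, IsStepWalk W.stepSrc W.stepDst l y y ∧
      ∀ e, (l.map Prod.fst).count e = if W.vertAisle e = some j then 0 else T e := by
  obtain ⟨e, he, hej, -⟩ := hT.exists_exit_aV hz₀ hz hTz
  obtain ⟨l, x, hl, hcount⟩ := hT.exists_isStepWalk
  have hcount₀ (e : W.E) : ((l.filter fun s => W.vertAisle s.1 ≠ some j).map Prod.fst).count e =
      if W.vertAisle e = some j then 0 else T e := by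
    rw [count_filter_vertAisle_ne, hcount]
  refine ⟨_, _, isStepWalk_filter_vertAisle_ne (z := z) hl (fun s hs h => ?_) fun hnil => ?_,
    hcount₀⟩
  · have : 0 < T s.1 := by rw [← hcount, List.count_pos_iff]; exact List.mem_map_of_mem hs
    rw [h, hTz] at this
    exact this.false
  · have := hcount₀ e
    rw [hnil, if_neg hej] at this
    exact he.ne this

theorem IsTour.setGap {T : W.E → ℕ} (hT : W.IsTour T) {j : Fin W.n} {z : Fin (W.picks j + 1)}
    (hz₀ : 0 < z.val) (hz : z.val < W.picks j) (hTz : T (W.vert j z) = 0)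
    (g : Fin (W.picks j + 1)) : W.IsTour (W.setGap T j g) := by
  obtain ⟨ea, hea, heaj, heainc⟩ := hT.exists_exit_aV hz₀ hz hTz
  obtain ⟨eb, heb, hebj, hebinc⟩ := hT.exists_exit_bV hz₀ hz hTz
  obtain ⟨l₀, y, hl₀, hcount₀⟩ := hT.exists_isStepWalk_without_aisle hz₀ hz hTz
  have hmem {e : W.E} (he : 0 < T e) (hej : W.vertAisle e ≠ some j) : ∃ s ∈ l₀, s.1 = e := by
    have : 0 < (l₀.map Prod.fst).count e := by rwa [hcount₀, if_neg hej]
    simpa using List.count_pos_iff.mp this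
  obtain ⟨sa, hsa, rfl⟩ := hmem hea heaj
  obtain ⟨sb, hsb, rfl⟩ := hmem heb hebj
  obtain ⟨CA, hCA, hCAoff, hCAon⟩ :=
    exists_aisleLoop j (lo := 0) (hi := g.val) (Nat.zero_le _) g.isLt.le (v := W.aV j) (.inl rfl)
  obtain ⟨CB, hCB, hCBoff, hCBon⟩ := exists_aisleLoop j (lo := g.val + 1) (hi := W.picks j + 1)
    g.isLt le_rfl (v := W.bV j) (.inr rfl)
  obtain ⟨l₁, hl₁, hperm₁⟩ :=
    hl₀.splice hsa (((incident_iff_step sa _).mp heainc).imp Eq.symm Eq.symm) hCA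
  obtain ⟨l₂, hl₂, hperm₂⟩ := hl₁.splice (hperm₁.mem_iff.mpr (List.mem_append_left _ hsb))
    (((incident_iff_step sb _).mp hebinc).imp Eq.symm Eq.symm) hCB
  have hval (e : W.E) : (l₂.map Prod.fst).count e = W.setGap T j g e := by
    rw [(hperm₂.map Prod.fst).count_eq, List.map_append, List.count_append,
      (hperm₁.map Prod.fst).count_eq, List.map_append, List.count_append, hcount₀]
    by_cases hej : W.vertAisle e = some j
    · obtain ⟨i, rfl⟩ := vertAisle_eq_some.mp hej
      rw [hCAon, hCBon, setGap_vert, if_pos hej]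
      simp only [Fin.ext_iff]
      split_ifs <;> omega
    · rw [hCAoff e hej, hCBoff e hej, if_neg hej, setGap_of_vertAisle_ne hej, add_zero, add_zero]
  exact ⟨hT.1.setGap j g, fun v hv => deg_setGap_pos hT.2.1 ⟨_, hea, heaj, heainc⟩
    ⟨_, heb, hebj, hebinc⟩ hv, l₂, IsClosedWalk.of_isStepWalk hl₂, hval⟩

theorem length_le_of_swap {T T' : W.E → ℕ} {e₁ e₂ : W.E} (hne : e₁ ≠ e₂)
    (h : ∀ e, e ≠ e₁ → e ≠ e₂ → T' e = T e) (h₁ : T e₁ = 0) (h₁' : T' e₁ = 2)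
    (h₂ : T e₂ = 2) (h₂' : T' e₂ = 0) (hlen : W.elen e₁ ≤ W.elen e₂) :
    W.length T' ≤ W.length T := by
  have hdiff : W.length T' - W.length T = ∑ e, ((T' e : ℝ) - T e) * W.elen e := by
    simp only [length, ← Finset.sum_sub_distrib, sub_mul]
  rw [Fintype.sum_eq_add e₁ e₂ hne fun e ⟨he₁, he₂⟩ => by rw [h e he₁ he₂, sub_self, zero_mul],
    h₁, h₁', h₂, h₂'] at hdiff
  push_cast at hdiff
  linarith

theorem exists_isTour_forall_length_le (htour : ∃ T, W.IsTour T) :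
    ∃ T, W.IsTour T ∧ ∀ T', W.IsTour T' → W.length T ≤ W.length T' := by
  have hfin : {T | W.IsTour T}.Finite :=
    (Set.finite_Iic (fun _ => 2 : W.E → ℕ)).subset fun T hT => hT.1
  obtain ⟨T, hT, hmin⟩ := Set.exists_min_image _ W.length hfin htour
  exact ⟨T, hT, hmin⟩

theorem exists_minTour_vconf {T : W.E → ℕ} (hT : W.IsTour T)
    (hmin : ∀ T', W.IsTour T' → W.length T ≤ W.length T') (j : Fin W.n) :
    ∃ T', W.IsTour T' ∧ (∀ T'', W.IsTour T'' → W.length T' ≤ W.length T'') ∧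
      (∀ e, W.vertAisle e ≠ some j → T' e = T e) ∧
        ∃ c, ∀ i, T' (W.vert j i) = W.vconfFun j c i := by
  rcases hT.aisle_trichotomy j with h1 | h2 | ⟨z, hz⟩
  · exact ⟨T, hT, hmin, fun _ _ => rfl, .onepass, h1⟩
  · exact ⟨T, hT, hmin, fun _ _ => rfl, .twopass, h2⟩
  by_cases hz' : z.val = 0 ∨ z.val = W.picks j ∨ z = W.gapIdx j
  · exact ⟨T, hT, hmin, fun _ _ => rfl, exists_vconfFun_of_single_zero hz hz'⟩
  obtain ⟨hz₀, hzp, hzg⟩ : z.val ≠ 0 ∧ z.val ≠ W.picks j ∧ z ≠ W.gapIdx j := by tauto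
  have hTz : T (W.vert j z) = 0 := by rw [hz, if_pos rfl]
  have hlen : W.length (W.setGap T j (W.gapIdx j)) ≤ W.length T := by
    refine length_le_of_swap (mt vert_inj.mp hzg) (fun e he₁ he₂ => ?_) hTz
      (by rw [setGap_vert, if_neg hzg]) (by rw [hz, if_neg (Ne.symm hzg)])
      (by rw [setGap_vert, if_pos rfl]) (W.gapIdx_spec j z)
    by_cases hej : W.vertAisle e = some j
    · obtain ⟨i, rfl⟩ := vertAisle_eq_some.mp hej
      rw [setGap_vert, hz, if_neg (mt (congrArg _) he₂), if_neg (mt (congrArg _) he₁)]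
    · exact setGap_of_vertAisle_ne hej
  exact ⟨_, hT.setGap (by omega) (by omega) hTz (W.gapIdx j),
    fun T'' h'' => hlen.trans (hmin T'' h''), fun e he => setGap_of_vertAisle_ne he, .gap,
    fun i => setGap_vert i⟩

theorem exists_minTour_forall_vconf (htour : ∃ T, W.IsTour T) (s : Finset (Fin W.n)) :
    ∃ T, W.IsTour T ∧ (∀ T', W.IsTour T' → W.length T ≤ W.length T') ∧
      ∀ j ∈ s, ∃ c, ∀ i, T (W.vert j i) = W.vconfFun j c i := by
  classical
  induction s using Finset.induction_on with
  | empty =>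
    obtain ⟨T, hT, hmin⟩ := exists_isTour_forall_length_le htour
    exact ⟨T, hT, hmin, by simp⟩
  | insert j s hj ih =>
    obtain ⟨T, hT, hmin, hs⟩ := ih
    obtain ⟨T', hT', hmin', hoff, hc⟩ := exists_minTour_vconf hT hmin j
    refine ⟨T', hT', hmin', fun j' hj' => ?_⟩
    rcases Finset.mem_insert.mp hj' with rfl | hj'
    · exact hc
    · obtain ⟨c, hc'⟩ := hs j' hj'
      refine ⟨c, fun i => (hoff _ ?_).trans (hc' i)⟩
      rw [vertAisle_vert]
      rintro ⟨⟩
      exact hj hj'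

end Warehouse

theorem stmt3_general (W : Warehouse)
    (htour : ∃ T : W.E → ℕ, W.IsTour T) :
    ∃ T : W.E → ℕ, W.IsTour T ∧ (∀ T' : W.E → ℕ, W.IsTour T' → W.length T ≤ W.length T') ∧
      (∀ j : Fin W.n, ∃ c : VCName, ∀ i : Fin (W.picks j + 1),
        T (Sum.inl ⟨j, i⟩) = W.vconfFun j c i) ∧
      (∀ k : Fin (W.n - 1), ∃ h : HCName,
        T (Sum.inr (Sum.inl k)) = hcA h ∧ T (Sum.inr (Sum.inr k)) = hcB h) := by
  obtain ⟨T, hT, hmin, hconf⟩ := Warehouse.exists_minTour_forall_vconf htour Finset.univ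
  exact ⟨T, hT, hmin, fun j => hconf j (Finset.mem_univ j),
    fun k => exists_hcName_of_even_add (hT.1 _) (hT.1 _) (hT.even_add_horizontal k)⟩

/-- if `P` contains a pick vertex and `G` admits a tour subgraph, then
there is a minimum-length tour subgraph whose vertical edges in every aisle form one of
the six configurations and whose horizontal edges between consecutive aisles form one of
the five configurations. -/
theorem stmt3 (W : Warehouse) (hpick : ∃ v : W.V, W.IsPick v)
    (htour : ∃ T : W.E → ℕ, W.IsTour T) :
    ∃ T : W.E → ℕ, W.IsTour T ∧ (∀ T' : W.E → ℕ, W.IsTour T' → W.length T ≤ W.length T') ∧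
      (∀ j : Fin W.n, ∃ c : VCName, ∀ i : Fin (W.picks j + 1),
        T (Sum.inl ⟨j, i⟩) = W.vconfFun j c i) ∧
      (∀ k : Fin (W.n - 1), ∃ h : HCName,
        T (Sum.inr (Sum.inl k)) = hcA h ∧ T (Sum.inr (Sum.inr k)) = hcB h) :=
  stmt3_general W htour
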